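/- arXiv:1411.0114 — 4 statements merged into one kernel-verified Lean document; each statement's English description precedes it below -/
import Mathlib

section
/- The function P ↦ log det(I + T P) is concave on the set of n×n Hermitian positive semidefinite matrices, for any fixed Hermitian positive semidefinite matrix T. -/
open Matrix ComplexOrder

/-!
With `S = √T`, the Weinstein–Aronszajn identity gives `det (1 + T P) = det (1 + S P S)`, and
`P ↦ 1 + S P S` is affine and sends positive semidefinite matrices to positive definite ones, so it
suffices that `log ∘ det` is concave on positive definite matrices. For positive definite `A`, `B`,
write `B = R R` with `R = √B` and `A = R C R`; then `a A + b B = R (a C + b 1) R`, and the inequality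
reduces to `a log det C ≤ log det (a C + b 1)`, which is the concavity of `log` applied to each
eigenvalue of `C`.
-/

namespace Matrix

variable {𝕜 ι : Type*} [RCLike 𝕜]

theorem convex_setOf_posSemidef : Convex ℝ {A : Matrix ι ι 𝕜 | A.PosSemidef} :=
  fun _ hA _ hB _ _ ha hb _ => (hA.smul ha).add (hB.smul hb)

theorem convex_setOf_posDef : Convex ℝ {A : Matrix ι ι 𝕜 | A.PosDef} := by
  intro A hA B hB a b ha hb hab
  rcases ha.eq_or_lt with rfl | ha
  · simpa [show b = 1 by linarith] using hB
  · exact (hA.smul ha).add_posSemidef (hB.posSemidef.smul hb)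

variable [Fintype ι] [DecidableEq ι]

theorem IsHermitian.det_cfc {A : Matrix ι ι 𝕜} (hA : A.IsHermitian) (f : ℝ → ℝ) :
    (cfc f A).det = ∏ i, (f (hA.eigenvalues i) : 𝕜) := by
  rw [hA.cfc_eq]
  simp [IsHermitian.cfc, -Unitary.conjStarAlgAut_apply]

theorem PosDef.re_det_pos {A : Matrix ι ι 𝕜} (hA : A.PosDef) : 0 < RCLike.re A.det :=
  (RCLike.pos_iff.mp hA.det_pos).1

theorem PosDef.re_det_mul {A : Matrix ι ι 𝕜} (hA : A.PosDef) (B : Matrix ι ι 𝕜) :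
    RCLike.re (A * B).det = RCLike.re A.det * RCLike.re B.det := by
  simp [det_mul, RCLike.mul_re, (RCLike.pos_iff.mp hA.det_pos).2]

theorem log_re_det_mul_mul {R C : Matrix ι ι 𝕜} (hR : (R * R).PosDef) (hC : C.PosDef) :
    Real.log (RCLike.re (R * C * R).det)
      = Real.log (RCLike.re (R * R).det) + Real.log (RCLike.re C.det) := by
  rw [det_mul_right_comm, hR.re_det_mul, Real.log_mul hR.re_det_pos.ne' hC.re_det_pos.ne']

theorem PosDef.mul_log_re_det_le {C : Matrix ι ι 𝕜} (hC : C.PosDef) {a b : ℝ}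
    (ha : 0 ≤ a) (hb : 0 ≤ b) (hab : a + b = 1) :
    a * Real.log (RCLike.re C.det)
      ≤ Real.log (RCLike.re (a • C + b • (1 : Matrix ι ι 𝕜)).det) := by
  have hsa : IsSelfAdjoint C := hC.1
  have hcfc : a • C + b • (1 : Matrix ι ι 𝕜) = cfc (fun x => a * x + b) C := by
    rw [cfc_add .., cfc_const_mul .., cfc_id' .., cfc_const .., Algebra.algebraMap_eq_smul_one]
  have hev := hC.eigenvalues_pos
  have hmix : ∀ i, 0 < a * hC.1.eigenvalues i + b := fun i => by
    rcases ha.eq_or_lt with rfl | ha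
    · linarith
    · nlinarith [hev i]
  rw [hcfc, hC.1.det_cfc, hC.1.det_eq_prod_eigenvalues, ← RCLike.ofReal_prod,
    ← RCLike.ofReal_prod, RCLike.ofReal_re, RCLike.ofReal_re,
    Real.log_prod fun i _ => (hev i).ne', Real.log_prod fun i _ => (hmix i).ne', Finset.mul_sum]
  refine Finset.sum_le_sum fun i _ => ?_
  simpa using strictConcaveOn_log_Ioi.concaveOn.2 (Set.mem_Ioi.2 (hev i))
    (Set.mem_Ioi.2 one_pos) ha hb hab

open scoped MatrixOrder in
theorem concaveOn_log_re_det :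
    ConcaveOn ℝ {A : Matrix ι ι 𝕜 | A.PosDef} (fun A => Real.log (RCLike.re A.det)) := by
  refine ⟨convex_setOf_posDef, fun A hA B hB a b ha hb hab => ?_⟩
  set R := CFC.sqrt B
  have hRR : R * R = B := CFC.sqrt_mul_sqrt_self B hB.posSemidef.nonneg
  have hR : IsUnit R := (CFC.isUnit_sqrt_iff B hB.posSemidef.nonneg).2 hB.isUnit
  have hRH : star R⁻¹ = R⁻¹ := (CFC.sqrt_nonneg B).posSemidef.1.inv
  set C := R⁻¹ * A * R⁻¹
  have hC : C.PosDef := by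
    have := ((isUnit_nonsing_inv_iff.2 hR).posDef_star_right_conjugate_iff).2 hA
    rwa [hRH] at this
  have hAC : A = R * C * R := by
    have hdet : IsUnit R.det := (isUnit_iff_isUnit_det R).1 hR
    rw [← mul_assoc, ← mul_assoc, mul_nonsing_inv _ hdet, one_mul, mul_assoc,
      nonsing_inv_mul _ hdet, mul_one]
  have hmix : a • A + b • B = R * (a • C + b • 1) * R := by
    rw [hAC, ← hRR]
    simp [mul_add, add_mul]
  have hCmix : (a • C + b • 1).PosDef := convex_setOf_posDef hC PosDef.one ha hb hab
  simp only [smul_eq_mul]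
  rw [hmix, hAC, ← hRR, log_re_det_mul_mul (hRR ▸ hB) hC, log_re_det_mul_mul (hRR ▸ hB) hCmix]
  linear_combination hC.mul_log_re_det_le ha hb hab + Real.log (RCLike.re (R * R).det) * hab

open scoped MatrixOrder in
theorem PosSemidef.concaveOn_log_re_det_one_add_mul {T : Matrix ι ι 𝕜} (hT : T.PosSemidef) :
    ConcaveOn ℝ {P : Matrix ι ι 𝕜 | P.PosSemidef}
      (fun P => Real.log (RCLike.re (1 + T * P).det)) := by
  set S := CFC.sqrt T
  have hSS : S * S = T := CFC.sqrt_mul_sqrt_self T hT.nonneg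
  have hSH : Sᴴ = S := (CFC.sqrt_nonneg T).posSemidef.1
  have hdet : ∀ P, (1 + T * P).det = (1 + S * P * S).det := fun P => by
    rw [← hSS, mul_assoc, det_one_add_mul_comm]
  have hpd : ∀ P : Matrix ι ι 𝕜, P.PosSemidef → (1 + S * P * S).PosDef := fun P hP => by
    have := hP.mul_mul_conjTranspose_same S
    rw [hSH] at this
    exact PosDef.one.add_posSemidef this
  refine ⟨convex_setOf_posSemidef, fun P₁ h₁ P₂ h₂ a b ha hb hab => ?_⟩
  have hcomb : 1 + S * (a • P₁ + b • P₂) * S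
      = a • (1 + S * P₁ * S) + b • (1 + S * P₂ * S) := by
    rw [smul_add, smul_add, add_add_add_comm, ← add_smul, hab, one_smul]
    simp [mul_add, add_mul]
  simp only [hdet, hcomb]
  exact concaveOn_log_re_det.2 (hpd _ h₁) (hpd _ h₂) ha hb hab

end Matrix

theorem stmt_2 (n : ℕ) (T : Matrix (Fin n) (Fin n) ℂ) (hT : T.PosSemidef)
    (P₁ P₂ : Matrix (Fin n) (Fin n) ℂ) (hP₁ : P₁.PosSemidef) (hP₂ : P₂.PosSemidef)
    (t : ℝ) (ht0 : 0 ≤ t) (ht1 : t ≤ 1) :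
    t * Real.log ((1 + T * P₁).det.re) + (1 - t) * Real.log ((1 + T * P₂).det.re)
      ≤ Real.log ((1 + T * ((t : ℂ) • P₁ + ((1 - t : ℝ) : ℂ) • P₂)).det.re) := by
  simp only [Complex.coe_smul]
  exact hT.concaveOn_log_re_det_one_add_mul.2 hP₁ hP₂ ht0 (sub_nonneg.2 ht1) (add_sub_cancel t 1)
end

section
/- The difference of two log-det functions, P ↦ log det(I + A P) − log det(I + B P), with A ≠ B Hermitian positive definite, is in general neither concave nor convex: there exist 2×2 Hermitian positive definite A, B and Hermitian PSD matrices P₁, P₂ witnessing failure of concavity. -/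
/-!
Take `A = I`, `B = 2I` and restrict `f` to the ray through the rank-one projection
`E = diag(1, 0)`: there `f(sE) = log (1 + s) - log (1 + 2s)`. Comparing `f(E/2)` with the
average of `f(E)` and `f(0) = 0` amounts to `(3/4)² < 2/3`, i.e. `27 < 32`.
-/

open Matrix ComplexOrder

section

variable {n : Type*} [Fintype n] [DecidableEq n]

theorem det_one_add_smul_diagonal_single {R : Type*} [CommRing R] (i : n) (x : R) :
    (1 + x • diagonal (Pi.single i 1) : Matrix n n R).det = 1 + x := by
  rw [← diagonal_one, ← diagonal_smul, diagonal_add, det_diagonal,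
    Finset.prod_eq_single i (fun j _ hj => by simp [Pi.single_eq_of_ne hj]) (by simp)]
  simp

noncomputable def logDetGap (A B P : Matrix n n ℂ) : ℝ :=
  Real.log (1 + A * P).det.re - Real.log (1 + B * P).det.re

theorem logDetGap_smul_one_smul_diagonal_single (a b s : ℝ) (i : n) :
    logDetGap (a • 1) (b • 1) (s • diagonal (Pi.single i 1)) =
      Real.log (1 + a * s) - Real.log (1 + b * s) := by
  have det_re : ∀ c : ℝ,
      (1 + (c • 1 : Matrix n n ℂ) * s • diagonal (Pi.single i 1)).det.re = 1 + c * s := by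
    intro c
    rw [smul_mul_smul_comm, one_mul, ← Complex.coe_smul, det_one_add_smul_diagonal_single]
    simp
  simp only [logDetGap, det_re]

end

theorem three_mul_log_three_lt : 3 * Real.log 3 < 5 * Real.log 2 := by
  have h : Real.log (3 ^ 3) < Real.log (2 ^ 5) := Real.log_lt_log (by norm_num) (by norm_num)
  simpa only [Real.log_pow, Nat.cast_ofNat] using h

theorem stmt_3 :
    ∃ (A B P₁ P₂ : Matrix (Fin 2) (Fin 2) ℂ) (t : ℝ),
      A.PosDef ∧ B.PosDef ∧ A ≠ B ∧ P₁.PosSemidef ∧ P₂.PosSemidef ∧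
      0 < t ∧ t < 1 ∧
      (fun P : Matrix (Fin 2) (Fin 2) ℂ =>
          Real.log ((1 + A * P).det.re) - Real.log ((1 + B * P).det.re))
        ((t : ℂ) • P₁ + ((1 - t : ℝ) : ℂ) • P₂)
      < t * ((fun P : Matrix (Fin 2) (Fin 2) ℂ =>
          Real.log ((1 + A * P).det.re) - Real.log ((1 + B * P).det.re)) P₁)
        + (1 - t) * ((fun P : Matrix (Fin 2) (Fin 2) ℂ =>
          Real.log ((1 + A * P).det.re) - Real.log ((1 + B * P).det.re)) P₂) := by
  have hE : (diagonal (Pi.single 0 1) : Matrix (Fin 2) (Fin 2) ℂ).PosSemidef :=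
    .diagonal (Pi.single_nonneg.mpr zero_le_one)
  refine ⟨(1 : ℝ) • 1, (2 : ℝ) • 1, (1 : ℝ) • diagonal (Pi.single 0 1),
    (0 : ℝ) • diagonal (Pi.single 0 1), 1 / 2, PosDef.one.smul one_pos, PosDef.one.smul two_pos,
    ?_, hE.smul zero_le_one, hE.smul le_rfl, by norm_num, by norm_num, ?_⟩
  · intro h
    simpa using congrFun (congrFun h 0) 0
  · change logDetGap _ _ _ < _ * logDetGap _ _ _ + _ * logDetGap _ _ _
    simp only [logDetGap_smul_one_smul_diagonal_single]
    rw [Complex.coe_smul, Complex.coe_smul, zero_smul, smul_zero, add_zero, smul_smul, mul_one,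
      logDetGap_smul_one_smul_diagonal_single]
    norm_num
    rw [Real.log_div (by norm_num) (by norm_num)]
    linarith [three_mul_log_three_lt]
end

section
/- Fix positive reals ρ, β and a positive definite Hermitian n×n matrix R with n = βM (M a positive integer). The map δ ↦ (ρ/n)·tr(R(I + δR)^{-1}) from [0,∞) to (0,∞) is strictly decreasing and continuous, and is bounded above by ρ·λ_max(R); hence composed fixed-point equations of the form e = (ρ/n)tr(R(I+δR)^{-1}), δ = (ρ/M)tr(Q(I+βeQ)^{-1}) with Q Hermitian PSD admit at least one solution (e, δ) ∈ [0,∞)² by the intermediate value theorem. -/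
/-!
Diagonalising `A = U diag(λ) U*` turns `tr (A (1 + δ A)⁻¹)` into `∑ λᵢ / (1 + δ λᵢ)`, a sum of
continuous nonincreasing functions of `δ ≥ 0` with values in `[0, λᵢ]`, strictly decreasing when
`λᵢ > 0`. Hence `e ↦ f (g e)`, with `g e = (ρ / M) tr (Q (1 + β e Q)⁻¹) ≥ 0`, maps `[0, ∞)`
continuously into `[0, ρ λ_max(R)]`, so it has a fixed point by the intermediate value theorem.
-/

open Matrix ComplexOrder Set

namespace Matrix

variable {ι 𝕜 : Type*} [Fintype ι] [DecidableEq ι] [RCLike 𝕜] {A : Matrix ι ι 𝕜}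

namespace IsHermitian

lemma trace_cfc (hA : A.IsHermitian) (f : ℝ → ℝ) :
    (cfc f A).trace = ∑ i, (f (hA.eigenvalues i) : 𝕜) := by
  rw [hA.cfc_eq, IsHermitian.cfc, Unitary.conjStarAlgAut_apply, trace_mul_cycle,
    Unitary.coe_star_mul_self, one_mul, trace_diagonal]
  rfl

lemma mul_inv_one_add_smul_eq_cfc (hA : A.IsHermitian) {c : ℝ}
    (hc : ∀ i, 1 + c * hA.eigenvalues i ≠ 0) :
    A * (1 + (c : 𝕜) • A)⁻¹ = cfc (fun x ↦ x / (1 + c * x)) A := by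
  have hspec : ∀ x ∈ spectrum ℝ A, 1 + c * x ≠ 0 := by
    rintro x hx
    obtain ⟨i, rfl⟩ := hA.spectrum_real_eq_range_eigenvalues ▸ hx
    exact hc i
  have hfin : (spectrum ℝ A).Finite := by
    rw [hA.spectrum_real_eq_range_eigenvalues]; exact finite_range _
  have hlin : 1 + (c : 𝕜) • A = cfc (fun x ↦ 1 + c * x) A := by
    rw [cfc_add (a := A) (fun _ ↦ 1) (c * ·), cfc_const_one ℝ A, cfc_const_mul_id c A,
      RCLike.real_smul_eq_coe_smul (K := 𝕜)]
  have hinv : (1 + (c : 𝕜) • A)⁻¹ = cfc (fun x ↦ (1 + c * x)⁻¹) A := by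
    refine inv_eq_right_inv ?_
    rw [hlin, ← cfc_mul _ _ _ (hfin.continuousOn _) (hfin.continuousOn _), ← cfc_one ℝ A]
    exact cfc_congr fun x hx ↦ mul_inv_cancel₀ (hspec x hx)
  rw [hinv]
  conv_lhs => enter [1]; rw [← cfc_id' ℝ A]
  rw [← cfc_mul _ _ _ (hfin.continuousOn _) (hfin.continuousOn _)]
  rfl

end IsHermitian

noncomputable def resolventTrace (A : Matrix ι ι 𝕜) (δ : ℝ) : ℝ :=
  RCLike.re (A * (1 + (δ : 𝕜) • A)⁻¹).trace

namespace PosSemidef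

lemma resolventTrace_eq (hA : A.PosSemidef) {δ : ℝ} (hδ : 0 ≤ δ) :
    A.resolventTrace δ = ∑ i, hA.1.eigenvalues i / (1 + δ * hA.1.eigenvalues i) := by
  have hc : ∀ i, 1 + δ * hA.1.eigenvalues i ≠ 0 := fun i ↦ by
    have := hA.eigenvalues_nonneg i; positivity
  rw [resolventTrace, hA.1.mul_inv_one_add_smul_eq_cfc hc, hA.1.trace_cfc, map_sum]
  simp only [RCLike.ofReal_re]

lemma resolventTrace_nonneg (hA : A.PosSemidef) {δ : ℝ} (hδ : 0 ≤ δ) :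
    0 ≤ A.resolventTrace δ := by
  rw [hA.resolventTrace_eq hδ]
  exact Finset.sum_nonneg fun i _ ↦ by have := hA.eigenvalues_nonneg i; positivity

lemma resolventTrace_le (hA : A.PosSemidef) {δ : ℝ} (hδ : 0 ≤ δ) :
    A.resolventTrace δ ≤ Fintype.card ι * ⨆ i, hA.1.eigenvalues i := by
  rw [hA.resolventTrace_eq hδ, ← nsmul_eq_mul]
  refine Finset.sum_le_card_nsmul _ _ _ fun i _ ↦ ?_
  have hi := hA.eigenvalues_nonneg i
  calc hA.1.eigenvalues i / (1 + δ * hA.1.eigenvalues i)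
      ≤ hA.1.eigenvalues i := div_le_self hi (by nlinarith)
    _ ≤ ⨆ i, hA.1.eigenvalues i := le_ciSup (finite_range _).bddAbove i

lemma continuousOn_resolventTrace (hA : A.PosSemidef) :
    ContinuousOn A.resolventTrace (Ici 0) := by
  refine ContinuousOn.congr ?_ fun δ hδ ↦ hA.resolventTrace_eq hδ
  refine continuousOn_finsetSum _ fun i _ ↦ continuousOn_const.div (by fun_prop) fun δ hδ ↦ ?_
  have := hA.eigenvalues_nonneg i
  have : (0 : ℝ) ≤ δ := hδ
  positivity

end PosSemidef

lemma PosDef.strictAntiOn_resolventTrace [Nonempty ι] (hA : A.PosDef) :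
    StrictAntiOn A.resolventTrace (Ici 0) := by
  intro x hx y hy hxy
  rw [hA.posSemidef.resolventTrace_eq hx, hA.posSemidef.resolventTrace_eq hy]
  refine Finset.sum_lt_sum_of_nonempty Finset.univ_nonempty fun i _ ↦ ?_
  have hi := hA.eigenvalues_pos i
  have hx : (0 : ℝ) ≤ x := hx
  exact div_lt_div_of_pos_left hi (by positivity) (by gcongr)

end Matrix

lemma exists_mem_Ici_isFixedPt_of_mapsTo {f : ℝ → ℝ} {C : ℝ} (hf : ContinuousOn f (Ici 0))
    (hmaps : MapsTo f (Ici 0) (Icc 0 C)) : ∃ x ∈ Ici 0, Function.IsFixedPt f x := by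
  have hC : 0 ≤ C := (hmaps self_mem_Ici).1.trans (hmaps self_mem_Ici).2
  obtain ⟨x, hx, hfix⟩ := exists_mem_Icc_isFixedPt_of_mapsTo (hf.mono Icc_subset_Ici_self) hC
    fun x hx ↦ hmaps hx.1
  exact ⟨x, hx.1, hfix⟩

theorem stmt_7 (M n : ℕ) (hM : 0 < M) (ρ β : ℝ) (hρ : 0 < ρ) (hβ : 0 < β)
    (hn : (n : ℝ) = β * M)
    (R : Matrix (Fin n) (Fin n) ℂ) (hR : R.PosDef)
    (Q : Matrix (Fin M) (Fin M) ℂ) (hQ : Q.PosSemidef) :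
    let f : ℝ → ℝ := fun δ => (ρ / n) * (R * (1 + (δ : ℂ) • R)⁻¹).trace.re
    StrictAntiOn f (Set.Ici 0) ∧
    ContinuousOn f (Set.Ici 0) ∧
    (∀ δ : ℝ, 0 ≤ δ → f δ ≤ ρ * (⨆ i : Fin n, hR.1.eigenvalues i)) ∧
    (∃ e δ : ℝ, 0 ≤ e ∧ 0 ≤ δ ∧
      e = (ρ / n) * (R * (1 + (δ : ℂ) • R)⁻¹).trace.re ∧
      δ = (ρ / M) * (Q * (1 + ((β * e : ℝ) : ℂ) • Q)⁻¹).trace.re) := by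
  intro f
  have hn_pos : (0 : ℝ) < n := by rw [hn]; positivity
  have : Nonempty (Fin n) := Fin.pos_iff_nonempty.mp (by exact_mod_cast hn_pos)
  have hf_anti : StrictAntiOn f (Ici 0) := fun x hx y hy hxy ↦
    mul_lt_mul_of_pos_left (hR.strictAntiOn_resolventTrace hx hy hxy) (by positivity)
  have hf_cont : ContinuousOn f (Ici 0) :=
    continuousOn_const.mul hR.posSemidef.continuousOn_resolventTrace
  have hf_le : ∀ δ : ℝ, 0 ≤ δ → f δ ≤ ρ * ⨆ i, hR.1.eigenvalues i := by
    intro δ hδ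
    calc f δ = ρ / n * R.resolventTrace δ := rfl
      _ ≤ ρ / n * (n * ⨆ i, hR.1.eigenvalues i) := by
          gcongr
          simpa using hR.posSemidef.resolventTrace_le hδ
      _ = ρ * ⨆ i, hR.1.eigenvalues i := by field_simp
  have hf_maps : MapsTo f (Ici 0) (Icc 0 (ρ * ⨆ i, hR.1.eigenvalues i)) := fun δ hδ ↦
    ⟨mul_nonneg (by positivity) (hR.posSemidef.resolventTrace_nonneg hδ), hf_le δ hδ⟩
  set g : ℝ → ℝ := fun e ↦ ρ / M * Q.resolventTrace (β * e)
  have hg_maps : MapsTo g (Ici 0) (Ici 0) := fun e he ↦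
    mul_nonneg (by positivity) (hQ.resolventTrace_nonneg (mul_nonneg hβ.le he))
  have hg_cont : ContinuousOn g (Ici 0) :=
    continuousOn_const.mul (hQ.continuousOn_resolventTrace.comp (by fun_prop)
      fun e he ↦ mul_nonneg hβ.le he)
  obtain ⟨e, he, hfix⟩ := exists_mem_Ici_isFixedPt_of_mapsTo (hf_cont.comp hg_cont hg_maps)
    (hf_maps.comp hg_maps)
  exact ⟨hf_anti, hf_cont, hf_le, e, g e, he, hg_maps he, hfix.symm, rfl⟩
end

section
/- Let T_M, T_E, P be n×n Hermitian PSD matrices and a, b > 0. If b·T_E − a·T_M is positive semidefinite, then log det(I + a T_M^{1/2} P T_M^{1/2}) ≤ log det(I + b T_E^{1/2} P T_E^{1/2}) for every Hermitian PSD P; hence the large-system secrecy-rate objective [log det(I + a T_M P) − log det(I + b T_E P)]⁺ is identically zero. -/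
/-!
Write `S = P^{1/2}`. By the Weinstein–Aronszajn identity `det (1 + X Y) = det (1 + Y X)`, every
determinant in the statement equals `det (1 + S (c T) S)` with `c T` one of `a T_M`, `b T_E`.
Conjugation by `S` preserves the Loewner order, so `a T_M ≤ b T_E` gives
`1 + S (a T_M) S ≤ 1 + S (b T_E) S`, and `det` is monotone on positive definite matrices:
for `0 < A ≤ B`, `det B = det A * det (1 + A^{-1/2} (B - A) A^{-1/2}) ≥ det A`.
-/

open Matrix ComplexOrder
open scoped MatrixOrder

namespace Matrix

section Determinant

variable {R m : Type*} [CommRing R] [Fintype m] [DecidableEq m]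

lemma det_one_add_smul_mul_comm {k : Type*} [Fintype k] [DecidableEq k] (c : R)
    (X : Matrix m k R) (Y : Matrix k m R) :
    (1 + c • (X * Y)).det = (1 + c • (Y * X)).det := by
  rw [← Matrix.mul_smul, det_one_add_mul_comm, Matrix.smul_mul]

lemma det_one_add_smul_conj_of_mul_self {S T : Matrix m m R} (hS : S * S = T) (c : R)
    (X : Matrix m m R) : (1 + c • (S * X * S)).det = (1 + c • (T * X)).det := by
  rw [Matrix.mul_assoc, det_one_add_smul_mul_comm, Matrix.mul_assoc, hS,
    det_one_add_smul_mul_comm]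

end Determinant

variable {𝕜 n : Type*} [RCLike 𝕜] [Fintype n] [DecidableEq n]

lemma PosSemidef.spectral_sqrt_mul_self {A : Matrix n n 𝕜} (hA : A.PosSemidef) :
    (hA.1.eigenvectorUnitary.1 * diagonal (RCLike.ofReal ∘ Real.sqrt ∘ hA.1.eigenvalues) *
        (star hA.1.eigenvectorUnitary : Matrix n n 𝕜)) *
      (hA.1.eigenvectorUnitary.1 * diagonal (RCLike.ofReal ∘ Real.sqrt ∘ hA.1.eigenvalues) *
        (star hA.1.eigenvectorUnitary : Matrix n n 𝕜)) = A := by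
  have h := CFC.sqrt_mul_sqrt_self A hA.nonneg
  rwa [CFC.sqrt_eq_real_sqrt A hA.nonneg, cfcₙ_eq_cfc, hA.1.cfc_eq, IsHermitian.cfc,
    Unitary.conjStarAlgAut_apply] at h

lemma PosSemidef.one_le_det_one_add {K : Matrix n n 𝕜} (hK : K.PosSemidef) :
    1 ≤ (1 + K).det := by
  have h : 1 + K = cfc (fun x : ℝ ↦ 1 + x) K := by
    rw [cfc_const_add (1 : ℝ) (fun x ↦ x) K, cfc_id' ℝ K, Algebra.algebraMap_eq_smul_one,
      one_smul]
  rw [h, hK.1.cfc_eq, IsHermitian.cfc, Unitary.conjStarAlgAut_apply, det_mul_right_comm,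
    Unitary.mul_star_self_of_mem (SetLike.coe_mem _), one_mul, det_diagonal]
  exact Finset.one_le_prod fun i _ ↦ by simpa using hK.eigenvalues_nonneg i

lemma PosDef.det_le_det_of_le {A B : Matrix n n 𝕜} (hA : A.PosDef) (hAB : A ≤ B) :
    A.det ≤ B.det := by
  set S := CFC.sqrt A
  have hSS : S * S = A := CFC.sqrt_mul_sqrt_self A hA.posSemidef.nonneg
  have hS : IsUnit S.det :=
    (isUnit_iff_isUnit_det S).mp (isUnit_of_mul_isUnit_left (hSS ▸ hA.isUnit))
  set K := S⁻¹ * (B - A) * S⁻¹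
  have hK : K.PosSemidef := by
    have hS_inv : S⁻¹ᴴ = S⁻¹ := (CFC.sqrt_nonneg A).posSemidef.1.inv
    simpa only [hS_inv] using (le_iff.mp hAB).conjTranspose_mul_mul_same S⁻¹
  have hB : S * (1 + K) * S = B := by
    have hSKS : S * K * S = B - A := by
      simp only [K, ← Matrix.mul_assoc, mul_nonsing_inv _ hS, Matrix.one_mul]
      rw [Matrix.mul_assoc, nonsing_inv_mul _ hS, Matrix.mul_one]
    rw [Matrix.mul_add, Matrix.add_mul, Matrix.mul_one, hSS, hSKS, add_sub_cancel]
  calc A.det = A.det * 1 := (mul_one _).symm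
    _ ≤ A.det * (1 + K).det := mul_le_mul_of_nonneg_left hK.one_le_det_one_add hA.det_pos.le
    _ = (S * (1 + K) * S).det := by rw [det_mul, det_mul, ← hSS, det_mul]; ring
    _ = B.det := by rw [hB]

lemma det_one_add_mul_eq_det_one_add_sqrt_conj {P : Matrix n n 𝕜} (hP : P.PosSemidef)
    (T : Matrix n n 𝕜) : (1 + T * P).det = (1 + CFC.sqrt P * T * CFC.sqrt P).det := by
  conv_lhs => rw [← CFC.sqrt_mul_sqrt_self P hP.nonneg, ← Matrix.mul_assoc, det_one_add_mul_comm]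
  rw [Matrix.mul_assoc]

lemma PosSemidef.posDef_one_add_conjugate {T C : Matrix n n 𝕜} (hT : T.PosSemidef)
    (hC : 0 ≤ C) : (1 + C * T * C).PosDef :=
  PosDef.one.add_posSemidef (conjugate_nonneg_of_nonneg hT.nonneg hC).posSemidef

lemma PosSemidef.det_one_add_mul_pos {T P : Matrix n n 𝕜} (hT : T.PosSemidef)
    (hP : P.PosSemidef) : 0 < (1 + T * P).det := by
  rw [det_one_add_mul_eq_det_one_add_sqrt_conj hP]
  exact (hT.posDef_one_add_conjugate (CFC.sqrt_nonneg P)).det_pos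

lemma PosSemidef.det_one_add_mul_mono {T T' P : Matrix n n 𝕜} (hT : T.PosSemidef)
    (hP : P.PosSemidef) (hTT' : T ≤ T') : (1 + T * P).det ≤ (1 + T' * P).det := by
  rw [det_one_add_mul_eq_det_one_add_sqrt_conj hP, det_one_add_mul_eq_det_one_add_sqrt_conj hP]
  exact (hT.posDef_one_add_conjugate (CFC.sqrt_nonneg P)).det_le_det_of_le
    (add_le_add_right (conjugate_le_conjugate_of_nonneg hTT' (CFC.sqrt_nonneg P)) 1)

end Matrix

theorem stmt_10_general (n : ℕ) (TM TE P : Matrix (Fin n) (Fin n) ℂ)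
    (hTM : TM.PosSemidef) (hTE : TE.PosSemidef) (hP : P.PosSemidef)
    (a b : ℝ) (ha : 0 < a)
    (hdom : (((b : ℂ) • TE) - ((a : ℂ) • TM)).PosSemidef) :
    Real.log ((1 + (a : ℂ) • ((hTM.1.eigenvectorUnitary.1 * diagonal ((fun x : ℝ => (x : ℂ)) ∘ (hTM.1.eigenvalues · |>.sqrt)) * (star hTM.1.eigenvectorUnitary : Matrix (Fin n) (Fin n) ℂ)) * P * (hTM.1.eigenvectorUnitary.1 * diagonal ((fun x : ℝ => (x : ℂ)) ∘ (hTM.1.eigenvalues · |>.sqrt)) * (star hTM.1.eigenvectorUnitary : Matrix (Fin n) (Fin n) ℂ)))).det.re) ≤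
      Real.log ((1 + (b : ℂ) • ((hTE.1.eigenvectorUnitary.1 * diagonal ((fun x : ℝ => (x : ℂ)) ∘ (hTE.1.eigenvalues · |>.sqrt)) * (star hTE.1.eigenvectorUnitary : Matrix (Fin n) (Fin n) ℂ)) * P * (hTE.1.eigenvectorUnitary.1 * diagonal ((fun x : ℝ => (x : ℂ)) ∘ (hTE.1.eigenvalues · |>.sqrt)) * (star hTE.1.eigenvectorUnitary : Matrix (Fin n) (Fin n) ℂ)))).det.re) ∧
    max (Real.log ((1 + (a : ℂ) • (TM * P)).det.re) -
         Real.log ((1 + (b : ℂ) • (TE * P)).det.re)) 0 = 0 := by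
  have haTM : ((a : ℂ) • TM).PosSemidef := hTM.smul (by exact_mod_cast ha.le)
  have hlog : Real.log ((1 + (a : ℂ) • (TM * P)).det.re) ≤
      Real.log ((1 + (b : ℂ) • (TE * P)).det.re) := by
    rw [← Matrix.smul_mul, ← Matrix.smul_mul]
    exact Real.log_le_log (Complex.pos_iff.mp (haTM.det_one_add_mul_pos hP)).1
      (haTM.det_one_add_mul_mono hP hdom).1
  refine ⟨?_, max_eq_right (sub_nonpos.mpr hlog)⟩
  -- `rw` fails here: the statement writes the coercion `ℝ → ℂ` where the lemma has `RCLike.ofReal`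
  convert hlog using 3
  · exact det_one_add_smul_conj_of_mul_self hTM.spectral_sqrt_mul_self _ _
  · exact det_one_add_smul_conj_of_mul_self hTE.spectral_sqrt_mul_self _ _

theorem stmt_10 (n : ℕ) (TM TE P : Matrix (Fin n) (Fin n) ℂ)
    (hTM : TM.PosSemidef) (hTE : TE.PosSemidef) (hP : P.PosSemidef)
    (a b : ℝ) (ha : 0 < a) (hb : 0 < b)
    (hdom : (((b : ℂ) • TE) - ((a : ℂ) • TM)).PosSemidef) :
    Real.log ((1 + (a : ℂ) • ((hTM.1.eigenvectorUnitary.1 * diagonal ((fun x : ℝ => (x : ℂ)) ∘ (hTM.1.eigenvalues · |>.sqrt)) * (star hTM.1.eigenvectorUnitary : Matrix (Fin n) (Fin n) ℂ)) * P * (hTM.1.eigenvectorUnitary.1 * diagonal ((fun x : ℝ => (x : ℂ)) ∘ (hTM.1.eigenvalues · |>.sqrt)) * (star hTM.1.eigenvectorUnitary : Matrix (Fin n) (Fin n) ℂ)))).det.re) ≤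
      Real.log ((1 + (b : ℂ) • ((hTE.1.eigenvectorUnitary.1 * diagonal ((fun x : ℝ => (x : ℂ)) ∘ (hTE.1.eigenvalues · |>.sqrt)) * (star hTE.1.eigenvectorUnitary : Matrix (Fin n) (Fin n) ℂ)) * P * (hTE.1.eigenvectorUnitary.1 * diagonal ((fun x : ℝ => (x : ℂ)) ∘ (hTE.1.eigenvalues · |>.sqrt)) * (star hTE.1.eigenvectorUnitary : Matrix (Fin n) (Fin n) ℂ)))).det.re) ∧
    max (Real.log ((1 + (a : ℂ) • (TM * P)).det.re) -
         Real.log ((1 + (b : ℂ) • (TE * P)).det.re)) 0 = 0 :=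
  stmt_10_general n TM TE P hTM hTE hP a b ha hdom
end
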